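/- For any totally irrational α ∈ [0,1)^s there exist infinitely many distinct special regions for α. -/

import Mathlib

open MeasureTheory

noncomputable section

/-- Embedding of an integer vector into `ℝ^s`. -/
def intVec (s : ℕ) (m : Fin s → ℤ) : Fin s → ℝ := fun i => (m i : ℝ)

/-- `y` belongs to `A` modulo `ℤ^s`. -/
def ModMem (s : ℕ) (y : Fin s → ℝ) (A : Set (Fin s → ℝ)) : Prop :=
  ∃ m : Fin s → ℤ, y + intVec s m ∈ A

/-- `α` is totally irrational: `1, α 0, …, α (s-1)` are `ℚ`-linearly independent. -/
def TotallyIrrational (s : ℕ) (α : Fin s → ℝ) : Prop :=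
  ∀ (m : Fin s → ℤ) (n : ℤ), (∑ i, (m i : ℝ) * α i) + (n : ℝ) = 0 → m = 0 ∧ n = 0

/-- `A ⊆ 𝕋^s` (given by a lift in `ℝ^s`) is a bounded remainder set for the
rotation by `α`. -/
def IsBRS (s : ℕ) (α : Fin s → ℝ) (A : Set (Fin s → ℝ)) : Prop :=
  ∃ C : ℝ, ∀ (x : Fin s → ℝ) (N : ℕ),
    |(∑ n ∈ Finset.range N,
        Set.indicator {y : Fin s → ℝ | ModMem s y A} (fun _ => (1:ℝ)) (x + n • α))
      - N * (volume A).toReal| ≤ C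

end


noncomputable section

/-- The vector `α' = (α, 1) ∈ ℝ^{s+1}`. -/
def alphaExt (s : ℕ) (α : Fin s → ℝ) : Fin (s+1) → ℝ := Fin.snoc α 1

/-- The lattice `Λ ⊆ ℝ^{s+1}` generated by `(α,1)` and `e_1, …, e_s`. -/
def Lam (s : ℕ) (α : Fin s → ℝ) : Set (Fin (s+1) → ℝ) :=
  {x | ∃ (n : ℤ) (a : Fin s → ℤ),
    x = (n : ℝ) • alphaExt s α + Fin.snoc (fun i => (a i : ℝ)) 0}

/-- Projection `φ : ℝ^{s+1} → ℝ^s` to the first `s` coordinates. -/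
def phiProj (s : ℕ) (x : Fin (s+1) → ℝ) : Fin s → ℝ := fun i => x i.castSucc

/-- Half-open parallelotope generated by `v_1, …, v_m`. -/
def Ptope {m : ℕ} {E : Type*} [AddCommMonoid E] [Module ℝ E]
    (v : Fin m → E) : Set E :=
  {x | ∃ t : Fin m → ℝ, (∀ i, 0 ≤ t i ∧ t i < 1) ∧ x = ∑ i, t i • v i}

/-- The set of `ℤ`-linear combinations of a family of vectors. -/
def zSpanSet {m : ℕ} {E : Type*} [AddCommMonoid E] [Module ℝ E]
    (v : Fin m → E) : Set E :=
  {x | ∃ c : Fin m → ℤ, x = ∑ i, (c i : ℝ) • v i}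

/-- The special region associated to a basis `v` of `Λ`:
`A = φ(P(v_1,…,v_s))` (condition (S1)). -/
def specialRegionOf (s : ℕ) (v : Fin (s+1) → (Fin (s+1) → ℝ)) : Set (Fin s → ℝ) :=
  (phiProj s) '' (Ptope (fun i : Fin s => v i.castSucc))

/-- Conditions (S2)-(S4) making `v` a basis defining a special region for `α`. -/
def IsSpecialBasis (s : ℕ) (α : Fin s → ℝ) (v : Fin (s+1) → (Fin (s+1) → ℝ)) : Prop :=
  (phiProj s (v (Fin.last s)) ∈ specialRegionOf s v) ∧
  (zSpanSet v = Lam s α) ∧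
  (∀ I : Finset (Fin s),
    0 < v (Fin.last s) (Fin.last s) - ∑ i ∈ I, v i.castSucc (Fin.last s))

/-- `A` is a special region for `α`. -/
def IsSpecialRegion (s : ℕ) (α : Fin s → ℝ) (A : Set (Fin s → ℝ)) : Prop :=
  ∃ v : Fin (s+1) → (Fin (s+1) → ℝ), IsSpecialBasis s α v ∧ A = specialRegionOf s v

/-- The affine hyperplane `H_k = span(v_1,…,v_s) + k v_{s+1}`. -/
def Hplane (s : ℕ) (v : Fin (s+1) → (Fin (s+1) → ℝ)) (k : ℤ) : Set (Fin (s+1) → ℝ) :=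
  {x | ∃ c : Fin s → ℝ, x = (∑ i, c i • v i.castSucc) + (k : ℝ) • v (Fin.last s)}

end


/-!
Fix a coordinate `β = α j₀`, which is irrational and positive. The Stern–Brocot process
produces brackets `p/q < β < p'/q'` with `q p' - p q' = 1`; infinitely often the mediant lies
above `β`, i.e. `(qβ - p) + (q'β - p') < 0`, and at each such step the error `q'β - p'` strictly
increases. Such a bracket gives the basis `v_{j₀} = p' e_{j₀} - q' (α, 1)`, `v_j = e_j`
(`j ≠ j₀`), `v_{s+1} = q (α, 1) + d` of `Λ`, a unimodular change of the generators; the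
inequality on the errors is what lets the integer vector `d` put `φ(v_{s+1})` inside
`φ(P(v_1, …, v_s))`. The `j₀`-th coordinates of that region fill `[0, p' - q'β)`, so the
regions of these brackets are pairwise distinct.
-/

open Set Submodule

noncomputable section

theorem TotallyIrrational.irrational {s : ℕ} {α : Fin s → ℝ} (h : TotallyIrrational s α)
    (j : Fin s) : Irrational (α j) := by
  rintro ⟨r, hr⟩
  have hsum :
      ∑ i, ((Pi.single j (r.den : ℤ) : Fin s → ℤ) i : ℝ) * α i + ((-r.num : ℤ) : ℝ) = 0 := by
    simp only [Pi.single_apply, Int.cast_ite, Int.cast_natCast, Int.cast_zero, ite_mul, zero_mul,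
      Finset.sum_ite_eq', Finset.mem_univ, if_true, ← hr, Int.cast_neg]
    rw [add_neg_eq_zero]
    exact_mod_cast Rat.den_mul_eq_num r
  simpa using congrFun (h _ _ hsum).1 j

section SternBrocot

variable {β : ℝ}

def approxError (β : ℝ) : ℤ × ℤ →+ ℝ :=
  AddMonoidHom.mk' (fun x => x.2 * β - x.1) fun x y => by
    simp only [Prod.fst_add, Prod.snd_add]; push_cast; ring

theorem approxError_apply (x : ℤ × ℤ) : approxError β x = x.2 * β - x.1 := rfl

theorem Irrational.approxError_ne_zero (hβ : Irrational β) {x : ℤ × ℤ} (hx : x.2 ≠ 0) :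
    approxError β x ≠ 0 :=
  ((hβ.intCast_mul hx).sub_intCast x.1).ne_zero

/-- `p/q < β < p'/q'` with `q p' - p q' = 1`, for `ab = ((p, q), (p', q'))`. -/
structure IsUnimodularBracket (β : ℝ) (ab : (ℤ × ℤ) × (ℤ × ℤ)) : Prop where
  approxError_fst_pos : 0 < approxError β ab.1
  approxError_snd_neg : approxError β ab.2 < 0
  one_le_fst_den : 1 ≤ ab.1.2
  snd_den_nonneg : 0 ≤ ab.2.2
  det_eq_one : ab.1.2 * ab.2.1 - ab.1.1 * ab.2.2 = 1

def sternBrocotStep (β : ℝ) (ab : (ℤ × ℤ) × (ℤ × ℤ)) : (ℤ × ℤ) × (ℤ × ℤ) :=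
  if 0 < approxError β (ab.1 + ab.2) then (ab.1 + ab.2, ab.2) else (ab.1, ab.1 + ab.2)

def sternBrocot (β : ℝ) (n : ℕ) : (ℤ × ℤ) × (ℤ × ℤ) :=
  (sternBrocotStep β)^[n] ((0, 1), (1, 0))

theorem sternBrocot_succ (n : ℕ) :
    sternBrocot β (n + 1) = sternBrocotStep β (sternBrocot β n) :=
  Function.iterate_succ_apply' _ _ _

theorem isUnimodularBracket_init (hβ : 0 < β) : IsUnimodularBracket β ((0, 1), (1, 0)) where
  approxError_fst_pos := by simpa [approxError_apply] using hβ
  approxError_snd_neg := by simp [approxError_apply]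
  one_le_fst_den := le_rfl
  snd_den_nonneg := le_rfl
  det_eq_one := rfl

theorem IsUnimodularBracket.sternBrocotStep (hβ : Irrational β)
    {ab : (ℤ × ℤ) × (ℤ × ℤ)} (h : IsUnimodularBracket β ab) :
    IsUnimodularBracket β (sternBrocotStep β ab) := by
  obtain ⟨h₁, h₂, h₃, h₄, h₅⟩ := h
  unfold _root_.sternBrocotStep
  split_ifs with hpos
  · exact ⟨hpos, h₂, by dsimp only; rw [Prod.snd_add]; omega, h₄,
      by dsimp only; rw [Prod.fst_add, Prod.snd_add]; linear_combination h₅⟩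
  · have hneg : approxError β (ab.1 + ab.2) < 0 :=
      (not_lt.1 hpos).lt_of_ne (hβ.approxError_ne_zero (by rw [Prod.snd_add]; omega))
    exact ⟨h₁, hneg, h₃, by dsimp only; rw [Prod.snd_add]; omega,
      by dsimp only; rw [Prod.fst_add, Prod.snd_add]; linear_combination h₅⟩

theorem isUnimodularBracket_sternBrocot (hβ : Irrational β) (hβ₀ : 0 < β) (n : ℕ) :
    IsUnimodularBracket β (sternBrocot β n) := by
  induction n with
  | zero => exact isUnimodularBracket_init hβ₀
  | succ n ih => rw [sternBrocot_succ]; exact ih.sternBrocotStep hβ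

/-- The steps at which the mediant falls above `β`, so that the upper endpoint moves. -/
def upperSteps (β : ℝ) : Set ℕ :=
  {n | approxError β ((sternBrocot β n).1 + (sternBrocot β n).2) < 0}

theorem sternBrocot_succ_of_mem_upperSteps {n : ℕ} (hn : n ∈ upperSteps β) :
    sternBrocot β (n + 1) =
      ((sternBrocot β n).1, (sternBrocot β n).1 + (sternBrocot β n).2) := by
  rw [sternBrocot_succ, sternBrocotStep, if_neg (not_lt.2 (le_of_lt hn))]

theorem monotone_approxError_snd_sternBrocot (hβ : Irrational β) (hβ₀ : 0 < β) :
    Monotone fun n => approxError β (sternBrocot β n).2 := by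
  refine monotone_nat_of_le_succ fun n => ?_
  have hpos := (isUnimodularBracket_sternBrocot hβ hβ₀ n).approxError_fst_pos
  simp only [sternBrocot_succ, sternBrocotStep]
  split_ifs
  · exact le_rfl
  · simp only [map_add]; linarith

theorem strictMonoOn_approxError_snd_sternBrocot (hβ : Irrational β) (hβ₀ : 0 < β) :
    StrictMonoOn (fun n => approxError β (sternBrocot β n).2) (upperSteps β) := by
  intro n hn m _ hnm
  have hpos := (isUnimodularBracket_sternBrocot hβ hβ₀ n).approxError_fst_pos
  calc approxError β (sternBrocot β n).2
      < approxError β (sternBrocot β (n + 1)).2 := by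
        rw [sternBrocot_succ_of_mem_upperSteps hn, map_add]; linarith
    _ ≤ approxError β (sternBrocot β m).2 :=
        monotone_approxError_snd_sternBrocot hβ hβ₀ hnm

theorem sternBrocot_add_of_forall_notMem_upperSteps (hβ : Irrational β) (hβ₀ : 0 < β) {n : ℕ}
    (hn : ∀ m, n ≤ m → m ∉ upperSteps β) (k : ℕ) :
    sternBrocot β (n + k) =
      ((sternBrocot β n).1 + k • (sternBrocot β n).2, (sternBrocot β n).2) := by
  induction k with
  | zero => simp
  | succ k ih =>
    have hk : 0 < approxError β ((sternBrocot β (n + k)).1 + (sternBrocot β (n + k)).2) := by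
      have hb := isUnimodularBracket_sternBrocot hβ hβ₀ (n + k)
      refine (not_lt.1 (hn _ (Nat.le_add_right n k))).lt_of_ne' (hβ.approxError_ne_zero ?_)
      have h₁ := hb.one_le_fst_den
      have h₂ := hb.snd_den_nonneg
      rw [Prod.snd_add]; omega
    rw [← add_assoc, sternBrocot_succ, sternBrocotStep, if_pos hk, ih, succ_nsmul]
    simp [add_assoc]

theorem upperSteps_infinite (hβ : Irrational β) (hβ₀ : 0 < β) : (upperSteps β).Infinite := by
  refine Nat.frequently_atTop_iff_infinite.1 (Filter.frequently_atTop.2 fun n => ?_)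
  by_contra! hn
  obtain ⟨k, hk⟩ := exists_nat_gt
    (approxError β (sternBrocot β n).1 / -approxError β (sternBrocot β n).2)
  have hb := isUnimodularBracket_sternBrocot hβ hβ₀
  have hpos := (hb (n + k)).approxError_fst_pos
  have hneg := (hb n).approxError_snd_neg
  rw [sternBrocot_add_of_forall_notMem_upperSteps hβ hβ₀ fun m hm => (hn m hm).not_gt, map_add,
    map_nsmul, nsmul_eq_mul] at hpos
  rw [div_lt_iff₀ (neg_pos.2 hneg)] at hk
  linarith

end SternBrocot

section BracketFamily

variable {M : Type*} [AddCommGroup M] {s : ℕ}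

def bracketFamily (W : M) (E : Fin s → M) (j₀ : Fin s) (a b : ℤ × ℤ) (d : Fin s → ℤ) :
    Fin (s + 1) → M :=
  Fin.snoc (fun j => if j = j₀ then b.1 • E j₀ - b.2 • W else E j) (a.2 • W + ∑ k, d k • E k)

theorem span_range_bracketFamily (W : M) (E : Fin s → M) (j₀ : Fin s) {a b : ℤ × ℤ}
    {d : Fin s → ℤ} (hd : d j₀ = -a.1) (hdet : a.2 * b.1 - a.1 * b.2 = 1) :
    span ℤ (range (bracketFamily W E j₀ a b d)) = span ℤ (range (Fin.snoc E W)) := by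
  set S := span ℤ (range (bracketFamily W E j₀ a b d))
  set T := span ℤ (range (Fin.snoc E W : Fin (s + 1) → M))
  have hW : W ∈ T := subset_span ⟨Fin.last s, Fin.snoc_last _ _⟩
  have hE : ∀ k, E k ∈ T := fun k => subset_span ⟨k.castSucc, Fin.snoc_castSucc _ _ _⟩
  have hv : ∀ i, bracketFamily W E j₀ a b d i ∈ S := fun i => subset_span ⟨i, rfl⟩
  have hEk : ∀ k ≠ j₀, E k ∈ S := fun k hk => by
    simpa [bracketFamily, hk] using hv k.castSucc
  have hv₀ : b.1 • E j₀ - b.2 • W ∈ S := by simpa [bracketFamily] using hv j₀.castSucc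
  have hu : a.2 • W - a.1 • E j₀ ∈ S := by
    have : a.2 • W - a.1 • E j₀ =
        bracketFamily W E j₀ a b d (Fin.last s) - ∑ k ∈ Finset.univ.erase j₀, d k • E k := by
      rw [bracketFamily, Fin.snoc_last, ← Finset.add_sum_erase _ _ (Finset.mem_univ j₀), hd]
      module
    rw [this]
    exact sub_mem (hv _) (sum_mem fun k hk => zsmul_mem (hEk k (Finset.ne_of_mem_erase hk)) _)
  refine span_eq_span ?_ ?_
  · rintro _ ⟨i, rfl⟩
    refine Fin.lastCases ?_ (fun j => ?_) i
    · rw [bracketFamily, Fin.snoc_last]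
      exact add_mem (zsmul_mem hW a.2) (sum_mem fun k _ => zsmul_mem (hE k) (d k))
    · rw [bracketFamily, Fin.snoc_castSucc]
      split_ifs
      · exact sub_mem (zsmul_mem (hE j₀) b.1) (zsmul_mem hW b.2)
      · exact hE j
  · rintro _ ⟨i, rfl⟩
    refine Fin.lastCases ?_ (fun k => ?_) i
    · have hWS : W = b.1 • (a.2 • W - a.1 • E j₀) + a.1 • (b.1 • E j₀ - b.2 • W) := by
        linear_combination (norm := module) -hdet • W
      simpa [← hWS] using add_mem (zsmul_mem hu b.1) (zsmul_mem hv₀ a.1)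
    · by_cases hk : k = j₀
      · have hES : E j₀ = b.2 • (a.2 • W - a.1 • E j₀) + a.2 • (b.1 • E j₀ - b.2 • W) := by
          linear_combination (norm := module) -hdet • E j₀
        simpa [hk, ← hES] using add_mem (zsmul_mem hu b.2) (zsmul_mem hv₀ a.2)
      · simpa using hEk k hk

end BracketFamily

section Parallelotope

theorem image_Ptope {E F : Type*} [AddCommMonoid E] [Module ℝ E] [AddCommMonoid F] [Module ℝ F]
    {m : ℕ} (f : E →ₗ[ℝ] F) (v : Fin m → E) : f '' Ptope v = Ptope (f ∘ v) := by
  ext y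
  constructor
  · rintro ⟨_, ⟨t, ht, rfl⟩, rfl⟩
    exact ⟨t, ht, by simp⟩
  · rintro ⟨t, ht, rfl⟩
    exact ⟨_, ⟨t, ht, rfl⟩, by simp⟩

variable {m : ℕ} (j₀ : Fin m) (c : Fin m → ℝ)

def updateStdBasis : Fin m → Fin m → ℝ := fun j => if j = j₀ then c else Pi.single j 1

theorem sum_smul_updateStdBasis (t : Fin m → ℝ) :
    ∑ j, t j • updateStdBasis j₀ c j = t + t j₀ • (c - Pi.single j₀ 1) := by
  have h : ∀ j, updateStdBasis j₀ c j =
      Pi.single j 1 + if j = j₀ then c - Pi.single j₀ 1 else 0 := by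
    intro j; unfold updateStdBasis; split_ifs with hj <;> simp [hj]
  simp only [h, smul_add, Finset.sum_add_distrib, smul_ite, smul_zero, Finset.sum_ite_eq',
    Finset.mem_univ, if_true]
  congr 1
  ext k; simp [Finset.sum_apply, Pi.single_apply]

variable {j₀ c}

theorem mem_Ptope_updateStdBasis (hc : 0 < c j₀) {x : Fin m → ℝ} (hx₀ : x j₀ ∈ Ico 0 (c j₀))
    (hx : ∀ k ≠ j₀, x k - x j₀ / c j₀ * c k ∈ Ico 0 1) : x ∈ Ptope (updateStdBasis j₀ c) := by
  set τ := x j₀ / c j₀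
  have hτ : τ * c j₀ = x j₀ := div_mul_cancel₀ _ hc.ne'
  refine ⟨x - τ • (c - Pi.single j₀ 1), fun k => ?_, ?_⟩
  · by_cases hk : k = j₀
    · subst hk
      have : x k - τ * (c k - 1) = τ := by linarith
      simpa [this] using ⟨div_nonneg hx₀.1 hc.le, (div_lt_one hc).2 hx₀.2⟩
    · simpa [hk] using hx k hk
  · rw [sum_smul_updateStdBasis]
    have : (x - τ • (c - Pi.single j₀ 1) : Fin m → ℝ) j₀ = τ := by
      simp only [Pi.sub_apply, Pi.smul_apply, smul_eq_mul, Pi.single_eq_same]; linarith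
    rw [this]; abel

theorem image_apply_Ptope_updateStdBasis (hc : 0 < c j₀) :
    (fun x => x j₀) '' Ptope (updateStdBasis j₀ c) = Ico 0 (c j₀) := by
  ext y
  constructor
  · rintro ⟨_, ⟨t, ht, rfl⟩, rfl⟩
    rw [sum_smul_updateStdBasis]
    have h := ht j₀
    simp only [Pi.add_apply, Pi.smul_apply, Pi.sub_apply, Pi.single_eq_same, smul_eq_mul]
    constructor <;> nlinarith [h.1, h.2]
  · intro hy
    refine ⟨(y / c j₀) • c, mem_Ptope_updateStdBasis hc ?_ fun k _ => ?_, ?_⟩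
    · simpa [div_mul_cancel₀ _ hc.ne'] using hy
    · simp [div_mul_cancel₀ _ hc.ne']
    · simp [div_mul_cancel₀ _ hc.ne']

end Parallelotope

section SpecialBasis

variable {s : ℕ}

theorem zSpanSet_eq_span {E : Type*} [AddCommGroup E] [Module ℝ E] {m : ℕ} (v : Fin m → E) :
    zSpanSet v = span ℤ (range v) := by
  ext x
  simp only [zSpanSet, Int.cast_smul_eq_zsmul, SetLike.mem_coe,
    mem_span_range_iff_exists_fun, mem_ofPred_eq, eq_comm]

theorem Lam_eq_span (α : Fin s → ℝ) :
    Lam s α = span ℤ (range (Fin.snoc (fun k : Fin s => Pi.single k.castSucc (1 : ℝ))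
      (alphaExt s α))) := by
  have hsnoc (a : Fin s → ℤ) : (Fin.snoc (fun i => (a i : ℝ)) 0 : Fin (s + 1) → ℝ) =
      ∑ k, a k • Pi.single k.castSucc (1 : ℝ) := by
    ext i
    refine Fin.lastCases ?_ (fun j => ?_) i <;> simp [Finset.sum_apply, Pi.single_apply]
  ext x
  simp only [Lam, SetLike.mem_coe, mem_span_range_iff_exists_fun, Fin.sum_univ_castSucc,
    Fin.snoc_castSucc, Fin.snoc_last, mem_ofPred_eq, hsnoc, Int.cast_smul_eq_zsmul]
  constructor
  · rintro ⟨n, a, rfl⟩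
    exact ⟨Fin.snoc a n, by simp [add_comm]⟩
  · rintro ⟨c, rfl⟩
    exact ⟨c (Fin.last s), fun k => c k.castSucc, add_comm _ _⟩

theorem phiProj_eq_funLeft : phiProj s = LinearMap.funLeft ℝ ℝ Fin.castSucc := rfl

variable {α : Fin s → ℝ} {j₀ : Fin s} {a b : ℤ × ℤ}

/-- The shifts making `φ(v_{s+1})` a point of the parallelotope `φ(P(v_1, …, v_s))`. -/
def bracketShift (α : Fin s → ℝ) (j₀ : Fin s) (a b : ℤ × ℤ) : Fin s → ℤ := fun k =>
  if k = j₀ then -a.1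
  else -⌊(a.2 + approxError (α j₀) a / -approxError (α j₀) b * b.2) * α k⌋

def bracketBasis (α : Fin s → ℝ) (j₀ : Fin s) (a b : ℤ × ℤ) : Fin (s + 1) → Fin (s + 1) → ℝ :=
  bracketFamily (alphaExt s α) (fun k => Pi.single k.castSucc 1) j₀ a b (bracketShift α j₀ a b)

theorem phiProj_alphaExt : phiProj s (alphaExt s α) = α := by
  ext; simp [phiProj, alphaExt]

theorem phiProj_single_castSucc (k : Fin s) :
    phiProj s (Pi.single k.castSucc 1) = Pi.single k 1 := by
  ext; simp [phiProj, Pi.single_apply]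

theorem specialRegionOf_bracketBasis :
    specialRegionOf s (bracketBasis α j₀ a b) =
      Ptope (updateStdBasis j₀ (b.1 • Pi.single j₀ 1 - b.2 • α)) := by
  rw [specialRegionOf, phiProj_eq_funLeft, image_Ptope]
  congr 1
  ext j : 1
  simp only [Function.comp_apply, bracketBasis, bracketFamily, Fin.snoc_castSucc, updateStdBasis]
  split_ifs
  · rw [map_sub, map_zsmul, map_zsmul, ← phiProj_eq_funLeft, phiProj_alphaExt,
      phiProj_single_castSucc]
  · rw [← phiProj_eq_funLeft, phiProj_single_castSucc]

theorem phiProj_bracketBasis_last :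
    phiProj s (bracketBasis α j₀ a b (Fin.last s)) =
      a.2 • α + fun k => (bracketShift α j₀ a b k : ℝ) := by
  ext k
  simp [bracketBasis, bracketFamily, phiProj, alphaExt, Finset.sum_apply, Pi.single_apply]

theorem bracketBasis_last_last : bracketBasis α j₀ a b (Fin.last s) (Fin.last s) = a.2 := by
  simp [bracketBasis, bracketFamily, alphaExt, Finset.sum_apply]

theorem bracketBasis_castSucc_last (j : Fin s) :
    bracketBasis α j₀ a b j.castSucc (Fin.last s) = if j = j₀ then -(b.2 : ℝ) else 0 := by
  by_cases hj : j = j₀ <;> simp [bracketBasis, bracketFamily, alphaExt, hj]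

theorem phiProj_bracketBasis_last_mem (hab : IsUnimodularBracket (α j₀) (a, b))
    (hsum : approxError (α j₀) (a + b) < 0) :
    phiProj s (bracketBasis α j₀ a b (Fin.last s)) ∈
      specialRegionOf s (bracketBasis α j₀ a b) := by
  have ha := hab.approxError_fst_pos
  have hb := hab.approxError_snd_neg
  rw [map_add] at hsum
  rw [specialRegionOf_bracketBasis, phiProj_bracketBasis_last]
  set x : Fin s → ℝ := a.2 • α + fun k => (bracketShift α j₀ a b k : ℝ)
  set c : Fin s → ℝ := b.1 • Pi.single j₀ 1 - b.2 • α
  have hxj : x j₀ = approxError (α j₀) a := by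
    simp [x, bracketShift, approxError_apply, sub_eq_add_neg]
  have hcj : c j₀ = -approxError (α j₀) b := by simp [c, approxError_apply]
  have hfract (k : Fin s) (hk : k ≠ j₀) : x k - x j₀ / c j₀ * c k =
      Int.fract ((a.2 + approxError (α j₀) a / -approxError (α j₀) b * b.2) * α k) := by
    rw [hxj, hcj]
    simp only [x, c, Pi.add_apply, Pi.sub_apply, zsmul_eq_mul, Pi.mul_apply,
      Pi.intCast_apply, Pi.single_eq_of_ne hk, bracketShift, if_neg hk, Int.cast_neg, Int.fract]
    ring
  refine mem_Ptope_updateStdBasis (by linarith) ?_ fun k hk => ?_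
  · rw [hxj, hcj]
    constructor <;> linarith
  · rw [hfract k hk]
    exact ⟨Int.fract_nonneg _, Int.fract_lt_one _⟩

theorem isSpecialBasis_bracketBasis (hab : IsUnimodularBracket (α j₀) (a, b))
    (hsum : approxError (α j₀) (a + b) < 0) : IsSpecialBasis s α (bracketBasis α j₀ a b) := by
  refine ⟨phiProj_bracketBasis_last_mem hab hsum, ?_, fun I => ?_⟩
  · rw [zSpanSet_eq_span, Lam_eq_span]
    exact congrArg SetLike.coe (span_range_bracketFamily _ _ _ (if_pos rfl) hab.det_eq_one)
  · have h₁ : (1 : ℝ) ≤ a.2 := by exact_mod_cast hab.one_le_fst_den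
    have h₂ : (0 : ℝ) ≤ b.2 := by exact_mod_cast hab.snd_den_nonneg
    simp only [bracketBasis_last_last, bracketBasis_castSucc_last, Finset.sum_ite_eq']
    split_ifs <;> linarith

theorem image_apply_specialRegionOf_bracketBasis (hb : approxError (α j₀) b < 0) :
    (fun x => x j₀) '' specialRegionOf s (bracketBasis α j₀ a b) =
      Ico 0 (-approxError (α j₀) b) := by
  rw [specialRegionOf_bracketBasis, image_apply_Ptope_updateStdBasis]
  · simp [approxError_apply]
  · simpa [approxError_apply] using hb

theorem approxError_eq_of_specialRegionOf_bracketBasis_eq {a' b' : ℤ × ℤ}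
    (hb : approxError (α j₀) b < 0) (hb' : approxError (α j₀) b' < 0)
    (h : specialRegionOf s (bracketBasis α j₀ a b) = specialRegionOf s (bracketBasis α j₀ a' b')) :
    approxError (α j₀) b = approxError (α j₀) b' := by
  have h' := congrArg (fun A => (fun x => x j₀) '' A) h
  simp only [image_apply_specialRegionOf_bracketBasis hb,
    image_apply_specialRegionOf_bracketBasis hb'] at h'
  simpa using ((Ico_eq_Ico_iff (Or.inl (neg_pos.2 hb))).1 h').2

end SpecialBasis

/-- For any totally irrational `α ∈ [0,1)^s` there are infinitely
many distinct special regions for `α`. -/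
theorem infinitely_many_special_regions
    (s : ℕ) (hs : 0 < s) (α : Fin s → ℝ) (hα : TotallyIrrational s α)
    (hrange : ∀ i, α i ∈ Set.Ico (0:ℝ) 1) :
    {A : Set (Fin s → ℝ) | IsSpecialRegion s α A}.Infinite := by
  set j₀ : Fin s := ⟨0, hs⟩
  have hβ : Irrational (α j₀) := hα.irrational j₀
  have hβ₀ : 0 < α j₀ := (hrange j₀).1.lt_of_ne' hβ.ne_zero
  have hbracket := isUnimodularBracket_sternBrocot hβ hβ₀
  set R : ℕ → Set (Fin s → ℝ) := fun n =>
    specialRegionOf s (bracketBasis α j₀ (sternBrocot (α j₀) n).1 (sternBrocot (α j₀) n).2)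
  have hR : R '' upperSteps (α j₀) ⊆ {A | IsSpecialRegion s α A} := by
    rintro _ ⟨n, hn, rfl⟩
    exact ⟨_, isSpecialBasis_bracketBasis (hbracket n) hn, rfl⟩
  have hinj : InjOn R (upperSteps (α j₀)) := fun n hn m hm hnm =>
    (strictMonoOn_approxError_snd_sternBrocot hβ hβ₀).injOn hn hm
      (approxError_eq_of_specialRegionOf_bracketBasis_eq (hbracket n).approxError_snd_neg
        (hbracket m).approxError_snd_neg hnm)
  exact ((upperSteps_infinite hβ hβ₀).image hinj).mono hR

end
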